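/- arXiv:1712.05582 — 8 statements merged into one kernel-verified Lean document; each statement's English description precedes it below -/
import Mathlib

section
/- Let E be a semigroup and I a minimal left ideal in E with at least one idempotent. Then I is the union over all idempotents u ∈ I of the sets uI, and if u, v are distinct idempotents in I then uI ∩ vI = ∅. -/
/-- Lemma 2.14A-(7)&(8): A minimal left ideal `I` with an idempotent is the
disjoint union of the groups `uI` over idempotents `u ∈ I`. -/
theorem minimal_left_ideal_partition {E : Type*} [Semigroup E] (I : Set E)
    (hne : I.Nonempty) (hIdeal : ∀ a : E, ∀ p ∈ I, a * p ∈ I)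
    (hMin : ∀ J : Set E, J ⊆ I → J.Nonempty → (∀ a : E, ∀ p ∈ J, a * p ∈ J) → J = I)
    (hidem : ∃ u ∈ I, u * u = u) :
    I = {x : E | ∃ u ∈ I, u * u = u ∧ ∃ p ∈ I, x = u * p} ∧
    (∀ u ∈ I, ∀ v ∈ I, u * u = u → v * v = v → u ≠ v →
      {x : E | ∃ p ∈ I, x = u * p} ∩ {x : E | ∃ p ∈ I, x = v * p} = ∅) := by
  -- Key lemma: for any p ∈ I, I * p = I, i.e. every y ∈ I is a * p for some a ∈ I.
  have L1 : ∀ p ∈ I, ∀ y ∈ I, ∃ a ∈ I, a * p = y := by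
    intro p hp y hy
    have hJ : {x : E | ∃ a ∈ I, x = a * p} = I := by
      apply hMin
      · rintro x ⟨a, ha, rfl⟩
        exact hIdeal a p hp
      · exact ⟨p * p, p, hp, rfl⟩
      · rintro b x ⟨a, ha, rfl⟩
        exact ⟨b * a, hIdeal b a ha, (mul_assoc b a p).symm⟩
    have : y ∈ {x : E | ∃ a ∈ I, x = a * p} := by rw [hJ]; exact hy
    obtain ⟨a, ha, h⟩ := this
    exact ⟨a, ha, h.symm⟩
  -- Every idempotent in I is a right identity on I.
  have L2 : ∀ u ∈ I, u * u = u → ∀ p ∈ I, p * u = p := by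
    intro u hu huu p hp
    obtain ⟨s, _, hs⟩ := L1 u hu p hp
    calc p * u = s * u * u := by rw [hs]
    _ = s * (u * u) := mul_assoc _ _ _
    _ = s * u := by rw [huu]
    _ = p := hs
  constructor
  · ext x
    constructor
    · intro hx
      obtain ⟨u0, hu0, hu0u0⟩ := hidem
      -- choose q ∈ I with q * x = u0; set e := x * q, an idempotent with e * x = x.
      obtain ⟨q, hq, hqx⟩ := L1 x hx u0 hu0
      refine ⟨x * q, hIdeal x q hq, ?_, x, hx, ?_⟩
      · calc x * q * (x * q) = x * (q * x) * q := by simp [mul_assoc]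
        _ = x * u0 * q := by rw [hqx]
        _ = x * q := by rw [L2 u0 hu0 hu0u0 x hx]
      · calc x = x * u0 := (L2 u0 hu0 hu0u0 x hx).symm
        _ = x * (q * x) := by rw [hqx]
        _ = x * q * x := (mul_assoc _ _ _).symm
    · rintro ⟨u, hu, _, p, hp, rfl⟩
      exact hIdeal u p hp
  · intro u hu v hv huu hvv huv
    ext x
    simp only [Set.mem_inter_iff, Set.mem_setOf_eq, Set.mem_empty_iff_false, iff_false]
    rintro ⟨⟨p, hp, rfl⟩, q, hq, hx⟩
    obtain ⟨x, hxdef⟩ : ∃ x, x = u * p := ⟨_, rfl⟩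
    rw [← hxdef] at hx
    have hxI : x ∈ I := hxdef ▸ hIdeal u p hp
    have hux : u * x = x := by rw [hxdef, ← mul_assoc, huu]
    have hvx : v * x = x := by rw [hx, ← mul_assoc, hvv]
    obtain ⟨z, hz, hzx⟩ := L1 x hxI u hu
    obtain ⟨x', hx'def⟩ : ∃ x', x' = u * z := ⟨_, rfl⟩
    have hx'I : x' ∈ I := hx'def ▸ hIdeal u z hz
    have hx'x : x' * x = u := by rw [hx'def, mul_assoc, hzx, huu]
    obtain ⟨z', hz', hz'x'⟩ := L1 x' hx'I u hu
    have hx''x' : (u * z') * x' = u := by rw [mul_assoc, hz'x', huu]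
    have hxx' : x * x' = u := by
      have h1 : x * x' = u * (x * x') := by rw [← mul_assoc, hux]
      calc x * x' = u * (x * x') := h1
      _ = ((u * z') * x') * (x * x') := by rw [hx''x']
      _ = (u * z') * ((x' * x) * x') := by simp [mul_assoc]
      _ = (u * z') * (u * x') := by rw [hx'x]
      _ = (u * z') * x' := by rw [hx'def]; simp only [← mul_assoc]; rw [mul_assoc (u*z') u u, huu]
      _ = u := hx''x'
    have : v = u := by
      calc v = v * u := (L2 u hu huu v hv).symm
      _ = v * (x * x') := by rw [hxx']
      _ = (v * x) * x' := (mul_assoc _ _ _).symm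
      _ = x * x' := by rw [hvx]
      _ = u := hxx'
    exact huv this.symm
end

section
/- Let E be a semigroup and I a minimal left ideal in E containing an idempotent. If p ∈ E and q, r ∈ I satisfy qp = rp, then q = r. -/
/-- Lemma 2.14A-(9): In a minimal left ideal with an idempotent, right
multiplication by any element of `E` is injective on `I`. -/
theorem minimal_left_ideal_right_cancel {E : Type*} [Semigroup E] (I : Set E)
    (hne : I.Nonempty) (hIdeal : ∀ a : E, ∀ p ∈ I, a * p ∈ I)
    (hMin : ∀ J : Set E, J ⊆ I → J.Nonempty → (∀ a : E, ∀ p ∈ J, a * p ∈ J) → J = I)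
    (hidem : ∃ u ∈ I, u * u = u)
    (p : E) (q : E) (hq : q ∈ I) (r : E) (hr : r ∈ I) (h : q * p = r * p) :
    q = r := by
  obtain ⟨u, hu, huu⟩ := hidem
  -- any idempotent in I is a right identity on I
  have rightId : ∀ e ∈ I, e * e = e → ∀ x ∈ I, x * e = x := by
    intro e he hee x hx
    have hJ : {y : E | ∃ a : E, y = a * e} = I := by
      apply hMin
      · rintro y ⟨a, rfl⟩; exact hIdeal a e he
      · exact ⟨e * e, e, rfl⟩
      · rintro a y ⟨b, rfl⟩
        exact ⟨a * b, (mul_assoc a b e).symm⟩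
    have : x ∈ {y : E | ∃ a : E, y = a * e} := by rw [hJ]; exact hx
    obtain ⟨a, rfl⟩ := this
    rw [mul_assoc, hee]
  set s := p * u with hs_def
  have hs : s ∈ I := hIdeal p u hu
  -- I * s is a left ideal contained in I, hence equal to I
  have hIs : {y : E | ∃ x ∈ I, y = x * s} = I := by
    apply hMin
    · rintro y ⟨x, hx, rfl⟩; exact hIdeal x s hs
    · exact ⟨u * s, u, hu, rfl⟩
    · rintro a y ⟨x, hx, rfl⟩
      exact ⟨a * x, hIdeal a x hx, (mul_assoc a x s).symm⟩
  have : u ∈ {y : E | ∃ x ∈ I, y = x * s} := by rw [hIs]; exact hu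
  obtain ⟨t, ht, hts⟩ := this
  -- hts : u = t * s
  have hf : s * t ∈ I := hIdeal s t ht
  have hsu : s * u = s := rightId u hu huu s hs
  have hff : (s * t) * (s * t) = s * t := by
    calc (s * t) * (s * t) = s * ((t * s) * t) := by simp [mul_assoc]
    _ = s * (u * t) := by rw [← hts]
    _ = (s * u) * t := (mul_assoc s u t).symm
    _ = s * t := by rw [hsu]
  have h1 : q * (s * t) = q := rightId _ hf hff q hq
  have h2 : r * (s * t) = r := rightId _ hf hff r hr
  have hqs : q * s = r * s := by
    rw [hs_def, ← mul_assoc, ← mul_assoc, h]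
  calc q = q * (s * t) := h1.symm
  _ = (q * s) * t := (mul_assoc q s t).symm
  _ = (r * s) * t := by rw [hqs]
  _ = r * (s * t) := mul_assoc r s t
  _ = r := h2
end

section
/- Let X be a compact Hausdorff space and let T be a semigroup acting on X by continuous maps (a semiflow with identity). The semiflow (T, X) is weakly almost periodic if and only if every element of its Ellis semigroup E(T, X) is a continuous map from X to X. -/
/-- If composing with every continuous real-valued function yields a continuous map,
and the codomain is compact Hausdorff (hence normal, so Urysohn applies),
then the map itself is continuous. -/
lemma continuous_of_comp_real_continuous {Y X : Type*} [TopologicalSpace Y]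
    [TopologicalSpace X] [CompactSpace X] [T2Space X] (p : Y → X)
    (h : ∀ f : X → ℝ, Continuous f → Continuous fun y => f (p y)) : Continuous p := by
  rw [continuous_def]
  intro U hU
  rw [isOpen_iff_mem_nhds]
  intro y hy
  obtain ⟨f, hf0, hf1, -⟩ := exists_continuous_zero_one_of_isClosed
    hU.isClosed_compl (isClosed_singleton (x := p y))
    (by simpa [Set.disjoint_singleton_right] using hy)
  have hV : IsOpen ((fun z => f (p z)) ⁻¹' Set.Ioi (1/2 : ℝ)) :=
    (h f f.continuous).isOpen_preimage _ isOpen_Ioi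
  refine Filter.mem_of_superset (hV.mem_nhds ?_) ?_
  · have : f (p y) = 1 := hf1 rfl
    simp [this]; norm_num
  · intro z hz
    simp only [Set.mem_preimage]
    by_contra hc
    have : f (p z) = 0 := hf0 hc
    simp only [Set.mem_preimage, Set.mem_Ioi, this] at hz
    norm_num at hz

/-- Lemma 2.6: A semiflow `(T, X)` on a compact Hausdorff space is weakly almost
periodic (for every continuous `f : X → ℝ`, the family `Tf` is relatively compact
in `C(X, ℝ)` with the pointwise topology) iff every element of its Ellis semigroup
(the pointwise closure of the acting maps in `X^X`) is continuous. -/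
theorem wap_iff_ellis_continuous {T X : Type*} [Monoid T] [TopologicalSpace T]
    [TopologicalSpace X] [CompactSpace X] [T2Space X]
    [MulAction T X] [ContinuousSMul T X] :
    (∀ f : X → ℝ, Continuous f →
      IsCompact (closure (Set.range fun t : T => fun x : X => f (t • x))) ∧
      closure (Set.range fun t : T => fun x : X => f (t • x)) ⊆
        {g : X → ℝ | Continuous g}) ↔
    (∀ p ∈ closure (Set.range fun t : T => fun x : X => t • x), Continuous p) := by
  constructor
  · intro hwap p hp
    apply continuous_of_comp_real_continuous
    intro f hf
    -- the post-composition map Φ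
    have hΦ : Continuous fun g : X → X => fun x => f (g x) :=
      continuous_pi fun x => hf.comp (continuous_apply x)
    have hmem : (fun x => f (p x)) ∈
        closure (Set.range fun t : T => fun x : X => f (t • x)) := by
      have := image_closure_subset_closure_image (s := Set.range fun t : T => fun x : X => t • x) hΦ
      have h1 : (fun x => f (p x)) ∈
          (fun g : X → X => fun x => f (g x)) '' closure (Set.range fun t : T => fun x : X => t • x) :=
        Set.mem_image_of_mem _ hp
      have h2 := this h1
      refine closure_mono ?_ h2
      rintro g ⟨q, ⟨t, rfl⟩, rfl⟩
      exact ⟨t, rfl⟩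
    exact (hwap f hf).2 hmem
  · intro hell f hf
    have hΦ : Continuous fun g : X → X => fun x => f (g x) :=
      continuous_pi fun x => hf.comp (continuous_apply x)
    constructor
    · -- compactness: functions take values in the compact set `range f`
      have hK : IsCompact (Set.range f) := isCompact_range hf
      have hpi : IsCompact (Set.pi Set.univ fun _ : X => Set.range f) :=
        isCompact_univ_pi fun _ => hK
      have hsub : (Set.range fun t : T => fun x : X => f (t • x)) ⊆
          Set.pi Set.univ fun _ : X => Set.range f := by
        rintro g ⟨t, rfl⟩ x -
        exact ⟨t • x, rfl⟩
      exact hpi.of_isClosed_subset isClosed_closure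
        (closure_minimal hsub hpi.isClosed)
    · -- every limit function is `f ∘ p` for some `p` in the (compact) Ellis semigroup
      have hE : IsCompact (closure (Set.range fun t : T => fun x : X => t • x)) :=
        isClosed_closure.isCompact
      have himg : IsClosed ((fun g : X → X => fun x => f (g x)) ''
          closure (Set.range fun t : T => fun x : X => t • x)) :=
        (hE.image hΦ).isClosed
      have hsub : (Set.range fun t : T => fun x : X => f (t • x)) ⊆
          (fun g : X → X => fun x => f (g x)) ''
            closure (Set.range fun t : T => fun x : X => t • x) := by
        rintro g ⟨t, rfl⟩
        exact ⟨fun x => t • x, subset_closure ⟨t, rfl⟩, rfl⟩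
      intro g hg
      obtain ⟨p, hpE, rfl⟩ := closure_minimal hsub himg hg
      exact hf.comp (hell p hpE)
end

section
/- Let (T, X) be a semiflow on a compact Hausdorff space, and suppose (T, X) is universally transitive. If every element p of the Ellis semigroup E(T, X) has at least one point of continuity, then (T, X) is weakly almost periodic. -/
/-- If `(T, X)` is universally transitive and every element of the Ellis semigroup
has at least one point of continuity, then `(T, X)` is weakly almost periodic,
i.e. every element of the Ellis semigroup is continuous. -/
theorem wap_of_universally_transitive {T X : Type*} [Monoid T] [TopologicalSpace T]
    [TopologicalSpace X] [CompactSpace X] [T2Space X]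
    [MulAction T X] [ContinuousSMul T X]
    (huniv : ∃ x : X, ∀ y : X, ∃ a : X ≃ₜ X,
      (∀ (t : T) (z : X), a (t • z) = t • a z) ∧ a x = y)
    (hcont : ∀ p ∈ closure (Set.range fun t : T => fun x : X => t • x),
      ∃ x : X, ContinuousAt p x) :
    ∀ p ∈ closure (Set.range fun t : T => fun x : X => t • x), Continuous p := by
  intro p hp
  obtain ⟨x₀, hx₀⟩ := hcont p hp
  obtain ⟨x, hx⟩ := huniv
  rw [continuous_iff_continuousAt]
  intro y
  obtain ⟨a₁, ha₁c, ha₁⟩ := hx x₀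
  obtain ⟨a₂, ha₂c, ha₂⟩ := hx y
  set a : X ≃ₜ X := a₁.symm.trans a₂ with ha_def
  have ha_comm : ∀ (t : T) (z : X), a (t • z) = t • a z := by
    intro t z
    have h1 : a₁.symm (t • z) = t • a₁.symm z := by
      apply a₁.injective
      rw [ha₁c, a₁.apply_symm_apply, a₁.apply_symm_apply]
    simp only [ha_def, Homeomorph.trans_apply, h1, ha₂c]
  have hax₀ : a x₀ = y := by
    simp only [ha_def, Homeomorph.trans_apply]
    rw [← ha₁, a₁.symm_apply_apply, ha₂]
  -- p commutes with a, since commuting is a closed condition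
  have hcomm : ∀ z : X, p (a z) = a (p z) := by
    have hS : IsClosed {f : X → X | ∀ z, f (a z) = a (f z)} := by
      have : {f : X → X | ∀ z, f (a z) = a (f z)} =
          ⋂ z : X, {f : X → X | f (a z) = a (f z)} := by
        ext f; simp
      rw [this]
      exact isClosed_iInter fun z =>
        isClosed_eq (continuous_apply (a z)) (a.continuous.comp (continuous_apply z))
    have hsub : Set.range (fun t : T => fun x : X => t • x) ⊆
        {f : X → X | ∀ z, f (a z) = a (f z)} := by
      rintro f ⟨t, rfl⟩ z
      exact (ha_comm t z).symm
    exact hS.closure_subset_iff.mpr hsub hp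
  -- hence p = a ∘ p ∘ a.symm pointwise, so continuity transfers
  have hpeq : p = a ∘ p ∘ a.symm := by
    funext w
    simp only [Function.comp_apply]
    rw [← hcomm, a.apply_symm_apply]
  rw [hpeq]
  have hsx : a.symm y = x₀ := by rw [← hax₀, a.symm_apply_apply]
  have h1 : ContinuousAt p (a.symm y) := by rw [hsx]; exact hx₀
  exact (a.continuous.continuousAt).comp (h1.comp a.symm.continuous.continuousAt)
end

section
/- Let (T, X) be a weakly almost periodic semiflow on a compact Hausdorff space X, and let I be a minimal left ideal in the Ellis semigroup E(T, X). Then the action of T on I by left composition, (t, p) ↦ t∘p, is a jointly meaningful semiflow that is itself weakly almost periodic; in particular every element of E(T, I) acts on I as left multiplication by some element of E(T, X), hence continuously. -/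
/-- Claim (ii) in the proof of Theorem 2.16A (Ellis–Nerurkar): if `(T, X)` is a
weakly almost periodic semiflow and `I` is a minimal left ideal of the Ellis
semigroup `E(T, X)`, then the induced semiflow of `T` on `I` (by `t·p = πₜ ∘ p`)
is weakly almost periodic: every element of its Ellis semigroup `E(T, I)` is
left multiplication by some element of `E(T, X)`, hence continuous. -/
theorem wap_on_minimal_left_ideal {T X : Type*} [Monoid T] [TopologicalSpace T]
    [TopologicalSpace X] [CompactSpace X] [T2Space X]
    [MulAction T X] [ContinuousSMul T X]
    (hwap : ∀ p ∈ closure (Set.range fun t : T => fun x : X => t • x), Continuous p)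
    (I : Set (X → X))
    (hsub : I ⊆ closure (Set.range fun t : T => fun x : X => t • x))
    (hne : I.Nonempty)
    (hIdeal : ∀ p ∈ closure (Set.range fun t : T => fun x : X => t • x),
      ∀ q ∈ I, p ∘ q ∈ I)
    (hMin : ∀ J : Set (X → X), J ⊆ I → J.Nonempty →
      (∀ p ∈ closure (Set.range fun t : T => fun x : X => t • x), ∀ q ∈ J, p ∘ q ∈ J) →
      J = I) :
    ∀ φ ∈ closure (Set.range fun t : T => fun p : I =>
        (⟨(fun x : X => t • x) ∘ (p : X → X),
          hIdeal _ (subset_closure (Set.mem_range_self t)) _ p.2⟩ : I)),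
      Continuous φ ∧
      ∃ q ∈ closure (Set.range fun t : T => fun x : X => t • x),
        ∀ p : I, (φ p : X → X) = q ∘ (p : X → X) := by
  intro φ hφ
  set E : Set (X → X) := closure (Set.range fun t : T => fun x : X => t • x) with hE
  have hEc : IsCompact E := isClosed_closure.isCompact
  haveI : CompactSpace E := isCompact_iff_compactSpace.mp hEc
  let Φ : E → I → I := fun q p => ⟨(q : X → X) ∘ (p : X → X), hIdeal q q.2 p p.2⟩
  have hΦcont : Continuous Φ := by
    refine continuous_pi fun p => ?_
    refine Continuous.subtype_mk ?_ _
    exact continuous_pi fun x =>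
      (continuous_apply ((p : X → X) x)).comp continuous_subtype_val
  have hclosed : IsClosed (Set.range Φ) := (isCompact_range hΦcont).isClosed
  have hsubset : Set.range (fun t : T => fun p : I =>
      (⟨(fun x : X => t • x) ∘ (p : X → X),
        hIdeal _ (subset_closure (Set.mem_range_self t)) _ p.2⟩ : I)) ⊆ Set.range Φ := by
    rintro _ ⟨t, rfl⟩
    exact ⟨⟨fun x : X => t • x, subset_closure (Set.mem_range_self t)⟩, rfl⟩
  have hmem : φ ∈ Set.range Φ := closure_minimal hsubset hclosed hφ
  obtain ⟨q, rfl⟩ := hmem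
  constructor
  · refine Continuous.subtype_mk ?_ _
    refine continuous_pi fun x => ?_
    exact (hwap q q.2).comp ((continuous_apply x).comp continuous_subtype_val)
  · exact ⟨q, q.2, fun p => rfl⟩
end

section
/- Let X be a compact Hausdorff uniform space and let φ, φ₁, φ₂, … be continuous self-maps of X with φₙ → φ pointwise on X. Then for every entourage ε there exists a dense open subset E_ε of X such that for every x₀ ∈ E_ε there exist a neighborhood V of x₀ and an index n₀ such that (φₙ(x), φₙ(y)) ∈ ε for all x, y ∈ V and all n ≥ n₀. -/
/-!
Fix a closed entourage `δ` with `δ ○ δ ○ δ ⊆ ε`. Since every orbit `n ↦ φₙ x` is Cauchy, `X` is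
covered by the closed sets `Fₙ` of points whose orbits stay `δ`-close from time `n` on. A compact
uniform space is regular, hence Baire, so the union of the interiors of the `Fₙ` is dense. Near a
point of `interior Fₙ₀`, continuity of `φₙ₀` makes `φₙ₀ x` and `φₙ₀ y` `δ`-close, and from time
`n₀` on each `φₙ x` stays `δ`-close to `φₙ₀ x`.
-/

open Filter Set Topology Uniformity

section

variable {X Y : Type*} [TopologicalSpace X] [UniformSpace Y]

def tailClose (f : ℕ → X → Y) (δ : SetRel Y Y) (n : ℕ) : Set X :=
  {x | ∀ m ≥ n, ∀ k ≥ n, (f m x, f k x) ∈ δ}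

theorem isClosed_tailClose {f : ℕ → X → Y} {δ : SetRel Y Y} (hf : ∀ n, Continuous (f n))
    (hδ : IsClosed δ) (n : ℕ) : IsClosed (tailClose f δ n) := by
  simp only [tailClose, ofPred_forall]
  exact isClosed_iInter fun m => isClosed_iInter fun _ => isClosed_iInter fun k =>
    isClosed_iInter fun _ => hδ.preimage ((hf m).prodMk (hf k))

omit [TopologicalSpace X] in
theorem iUnion_tailClose_eq_univ {f : ℕ → X → Y} {δ : SetRel Y Y}
    (hf : ∀ x, CauchySeq fun n => f n x) (hδ : δ ∈ 𝓤 Y) : ⋃ n, tailClose f δ n = univ :=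
  eq_univ_of_forall fun x => mem_iUnion.2 (cauchySeq_iff.1 (hf x) δ hδ)

theorem ContinuousAt.exists_mem_nhds_forall_mem_entourage {g : X → Y} {x₀ : X}
    (hg : ContinuousAt g x₀) {δ : SetRel Y Y} (hδ : δ ∈ 𝓤 Y) :
    ∃ V ∈ 𝓝 x₀, ∀ x ∈ V, ∀ y ∈ V, (g x, g y) ∈ δ := by
  have hclose : ∀ᶠ p in 𝓝 x₀ ×ˢ 𝓝 x₀, (g p.1, g p.2) ∈ δ := by
    rw [← nhds_prod_eq]
    exact (hg.prodMap hg).eventually (nhds_le_uniformity (g x₀) hδ)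
  exact eventually_prod_self_iff.1 hclose

theorem exists_isOpen_dense_eventually_mem_entourage [BaireSpace X] {f : ℕ → X → Y}
    (hf : ∀ n, Continuous (f n)) (hcauchy : ∀ x, CauchySeq fun n => f n x)
    {ε : SetRel Y Y} (hε : ε ∈ 𝓤 Y) :
    ∃ E : Set X, IsOpen E ∧ Dense E ∧
      ∀ x₀ ∈ E, ∃ V ∈ 𝓝 x₀, ∃ n₀ : ℕ, ∀ x ∈ V, ∀ y ∈ V, ∀ n ≥ n₀, (f n x, f n y) ∈ ε := by
  obtain ⟨t, ht, -, htε⟩ := comp_comp_symm_mem_uniformity_sets hε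
  obtain ⟨δ, hδ, hδ_closed, hδt⟩ := mem_uniformity_isClosed ht
  refine ⟨⋃ n, interior (tailClose f δ n), isOpen_iUnion fun _ => isOpen_interior,
    dense_iUnion_interior_of_closed (isClosed_tailClose hf hδ_closed)
      (iUnion_tailClose_eq_univ hcauchy hδ), fun x₀ hx₀ => ?_⟩
  obtain ⟨n₀, hx₀n₀⟩ := mem_iUnion.1 hx₀
  obtain ⟨W, hW, hWδ⟩ := (hf n₀).continuousAt.exists_mem_nhds_forall_mem_entourage hδ
  refine ⟨interior (tailClose f δ n₀) ∩ W, inter_mem (isOpen_interior.mem_nhds hx₀n₀) hW, n₀,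
    fun x hx y hy n hn => htε ?_⟩
  have hxF := interior_subset hx.1
  have hyF := interior_subset hy.1
  exact ⟨f n₀ y, ⟨f n₀ x, hδt (hxF n hn n₀ le_rfl), hδt (hWδ x hx.2 y hy.2)⟩,
    hδt (hyF n₀ le_rfl n hn)⟩

end

theorem pointwise_limit_generic_uniform_general {X : Type*} [UniformSpace X]
    [CompactSpace X]
    (φ : X → X) (φn : ℕ → X → X)
    (hφn : ∀ n, Continuous (φn n))
    (hconv : ∀ x : X, Filter.Tendsto (fun n => φn n x) Filter.atTop (nhds (φ x))) :
    ∀ ε ∈ uniformity X, ∃ E : Set X, IsOpen E ∧ Dense E ∧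
      ∀ x₀ ∈ E, ∃ V ∈ nhds x₀, ∃ n₀ : ℕ,
        ∀ x ∈ V, ∀ y ∈ V, ∀ n ≥ n₀, (φn n x, φn n y) ∈ ε :=
  fun _ hε => exists_isOpen_dense_eventually_mem_entourage hφn (fun x => (hconv x).cauchySeq) hε

/-- Theorem 2.20A: If continuous self-maps `φₙ` of a compact Hausdorff uniform
space converge pointwise to a continuous map `φ`, then for every entourage `ε`
there is a dense open set of points near which the `φₙ` are eventually
`ε`-uniformly equicontinuous. -/
theorem pointwise_limit_generic_uniform {X : Type*} [UniformSpace X]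
    [CompactSpace X] [T2Space X]
    (φ : X → X) (φn : ℕ → X → X)
    (hφ : Continuous φ) (hφn : ∀ n, Continuous (φn n))
    (hconv : ∀ x : X, Filter.Tendsto (fun n => φn n x) Filter.atTop (nhds (φ x))) :
    ∀ ε ∈ uniformity X, ∃ E : Set X, IsOpen E ∧ Dense E ∧
      ∀ x₀ ∈ E, ∃ V ∈ nhds x₀, ∃ n₀ : ℕ,
        ∀ x ∈ V, ∀ y ∈ V, ∀ n ≥ n₀, (φn n x, φn n y) ∈ ε :=
  pointwise_limit_generic_uniform_general φ φn hφn hconv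
end

section
/- Let (T, X) be a semiflow on a compact Hausdorff uniform space such that (T, X) is universally transitive. Then if a ∈ Aut(T, X) fixes some point of X and (T, X) has a dense orbit through that point, a is the identity. Moreover, if (T, X) is minimal and universally transitive, then (T, X) is distal. -/
/-- From the proof of Theorem 2.32A: for a universally transitive semiflow on a
compact Hausdorff uniform space, `Aut(T, X)` acts freely on `X` (an automorphism
fixing a point with dense orbit is the identity); moreover, if the semiflow is
minimal, then it is distal. -/
theorem universally_transitive_free_and_distal {T X : Type*} [Monoid T]
    [TopologicalSpace T] [UniformSpace X] [CompactSpace X] [T2Space X]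
    [MulAction T X] [ContinuousSMul T X]
    (huniv : ∃ x : X, ∀ y : X, ∃ a : X ≃ₜ X,
      (∀ (t : T) (z : X), a (t • z) = t • a z) ∧ a x = y) :
    (∀ a : X ≃ₜ X, (∀ (t : T) (z : X), a (t • z) = t • a z) →
      ∀ x₀ : X, a x₀ = x₀ → Dense (Set.range fun t : T => t • x₀) →
      ∀ x : X, a x = x) ∧
    ((∀ x : X, Dense (Set.range fun t : T => t • x)) →
      ∀ x y : X, x ≠ y → ∃ ε ∈ uniformity X, ∀ t : T, (t • x, t • y) ∉ ε) := by
  have free : ∀ a : X ≃ₜ X, (∀ (t : T) (z : X), a (t • z) = t • a z) →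
      ∀ x₀ : X, a x₀ = x₀ → Dense (Set.range fun t : T => t • x₀) →
      ∀ x : X, a x = x := by
    intro a hcomm x₀ hfix hdense x
    have heq : (a : X → X) = id := by
      apply Continuous.ext_on hdense a.continuous continuous_id
      rintro _ ⟨t, rfl⟩
      simp [hcomm t x₀, hfix]
    exact congrFun heq x
  refine ⟨free, ?_⟩
  intro hmin x y hxy
  by_contra hcon
  push_neg at hcon
  -- get an automorphism taking x to y
  obtain ⟨x₀, hx₀⟩ := huniv
  obtain ⟨a₁, ha₁, ha₁x⟩ := hx₀ x
  obtain ⟨a₂, ha₂, ha₂y⟩ := hx₀ y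
  set a : X ≃ₜ X := a₁.symm.trans a₂ with ha_def
  have hsymm : ∀ (t : T) (z : X), a₁.symm (t • z) = t • a₁.symm z := by
    intro t z
    apply a₁.injective
    rw [a₁.apply_symm_apply, ha₁ t, a₁.apply_symm_apply]
  have hcomm : ∀ (t : T) (z : X), a (t • z) = t • a z := by
    intro t z
    simp only [ha_def, Homeomorph.trans_apply, hsymm t, ha₂ t]
  have haxy : a x = y := by
    simp only [ha_def, Homeomorph.trans_apply, ← ha₁x, a₁.symm_apply_apply, ha₂y]
  -- the "proximal" filter
  set f : T → X × X := fun t => (t • x, t • y) with hf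
  set F : Filter (X × X) := uniformity X ⊓ Filter.principal (Set.range f) with hF
  have hne : F.NeBot := by
    rw [hF, Filter.inf_principal_neBot_iff]
    intro U hU
    obtain ⟨t, ht⟩ := hcon U hU
    exact ⟨f t, ht, ⟨t, rfl⟩⟩
  obtain ⟨p, hp⟩ := exists_clusterPt_of_compactSpace F
  -- p lies in the (closed) graph of a
  have hgraph : p ∈ Set.range (fun q : X => (q, a q)) := by
    have hclosed : IsClosed (Set.range fun q : X => (q, a q)) :=
      (isCompact_range (continuous_id.prodMk a.continuous)).isClosed
    have hsub : Set.range f ⊆ Set.range fun q : X => (q, a q) := by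
      rintro _ ⟨t, rfl⟩
      exact ⟨t • x, by simp [hf, hcomm t x, haxy]⟩
    have hp' : p ∈ closure (Set.range f) := by
      rw [mem_closure_iff_clusterPt]
      exact hp.mono inf_le_right
    exact hclosed.closure_subset_iff.mpr hsub hp'
  -- p lies on the diagonal
  have hdiag : p.1 = p.2 := by
    apply eq_of_uniformity_basis uniformity_hasBasis_closed
    rintro V ⟨hV, hVc⟩
    have : p ∈ closure V := by
      rw [mem_closure_iff_clusterPt]
      exact (hp.mono inf_le_left).mono (Filter.le_principal_iff.mpr hV)
    rwa [hVc.closure_eq] at this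
  obtain ⟨q, hq⟩ := hgraph
  have hfixq : a q = q := by
    have h1 : p.1 = q := (congrArg Prod.fst hq).symm
    have h2 : p.2 = a q := (congrArg Prod.snd hq).symm
    rw [← h2, ← h1, hdiag]
  have := free a hcomm q hfixq (hmin q) x
  rw [haxy] at this
  exact hxy this.symm
end

section
/- Let T be a semigroup of continuous self-maps of a compact Hausdorff space X such that the semiflow (T, X) is minimal and universally transitive. Then (T, X) is weakly almost periodic if and only if (T, X) is equicontinuous. -/
/-!
The Ellis semigroup `E`, the pointwise closure of `T` in `X → X`, is a compact semigroup under
composition. If its members are continuous, every `u ∈ E` commutes with the automorphisms of the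
flow. An idempotent `u` fixes `u x₀ = b x₀` for an automorphism `b`, hence fixes `x₀`, hence fixes
every point `a x₀` of `X`: the only idempotent is `id`. By Ellis–Numakura each left ideal `E ∘ p`
contains an idempotent, so `E` is a group. A compact group of continuous maps is equicontinuous:
a Namioka-type fragmentation argument (Baire category after a countable reduction) yields a
nonempty open piece of `E` of small uniform diameter, and finitely many right translates of it
cover `E`. Conversely, the pointwise closure of an equicontinuous family is equicontinuous.
-/

open Set Filter Topology Uniformity Function
open scoped SetRel

theorem Set.Countable.setOf_finset_subset {β : Type*} {B : Set β} (hB : B.Countable) :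
    {L : Finset β | ↑L ⊆ B}.Countable := by
  classical
  have := hB.to_subtype
  refine (countable_range fun s : Finset B => s.map (Embedding.subtype _)).mono fun L hL => ?_
  exact ⟨L.subtype (· ∈ B), Finset.subtype_map_of_mem hL⟩

theorem exists_countable_forall_finset_subset {α : Type*} (f : Finset α → Set α)
    (hf : ∀ s, (f s).Countable) :
    ∃ C : Set α, C.Countable ∧ ∀ s : Finset α, ↑s ⊆ C → f s ⊆ C := by
  let stage : ℕ → Set α := fun n => Nat.rec ∅ (fun _ C => C ∪ ⋃ s ∈ {s : Finset α | ↑s ⊆ C}, f s) n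
  have hmono : Monotone stage := monotone_nat_of_le_succ fun n => subset_union_left
  have hcount : ∀ n, (stage n).Countable := by
    intro n
    induction n with
    | zero => exact countable_empty
    | succ n ih => exact ih.union (ih.setOf_finset_subset.biUnion fun s _ => hf s)
  refine ⟨⋃ n, stage n, countable_iUnion hcount, fun s hs => ?_⟩
  obtain ⟨n, hn⟩ := hmono.directed_le.exists_mem_subset_of_finset_subset_biUnion hs
  have hstep : f s ⊆ stage (n + 1) := (subset_biUnion_of_mem (u := f) hn).trans subset_union_right
  exact hstep.trans (subset_iUnion stage (n + 1))

theorem exists_countable_forall_finset_subset₂ {α β : Type*} (f : Finset β → Set α)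
    (g : Finset α → Set β) (hf : ∀ t, (f t).Countable) (hg : ∀ s, (g s).Countable) :
    ∃ A : Set α, ∃ B : Set β, A.Countable ∧ B.Countable ∧
      (∀ t : Finset β, ↑t ⊆ B → f t ⊆ A) ∧ ∀ s : Finset α, ↑s ⊆ A → g s ⊆ B := by
  obtain ⟨C, hC, hCf⟩ := exists_countable_forall_finset_subset
    (fun u => Sum.inl '' f u.toRight ∪ Sum.inr '' g u.toLeft)
    fun u => ((hf _).image _).union ((hg _).image _)
  have hsub (s : Finset α) (t : Finset β) (hs : ↑s ⊆ Sum.inl ⁻¹' C) (ht : ↑t ⊆ Sum.inr ⁻¹' C) :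
      ↑(s.disjSum t) ⊆ C := by
    intro x hx
    rcases Finset.mem_disjSum.1 hx with ⟨a, ha, rfl⟩ | ⟨b, hb, rfl⟩
    exacts [hs ha, ht hb]
  refine ⟨Sum.inl ⁻¹' C, Sum.inr ⁻¹' C, hC.preimage Sum.inl_injective,
    hC.preimage Sum.inr_injective, fun t ht a ha => ?_, fun s hs b hb => ?_⟩
  · exact hCf _ (hsub ∅ t (by simp) ht) (Or.inl ⟨a, by rwa [Finset.toRight_disjSum], rfl⟩)
  · exact hCf _ (hsub s ∅ hs (by simp)) (Or.inr ⟨b, by rwa [Finset.toLeft_disjSum], rfl⟩)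

theorem PseudoMetric.triangle4 {X : Type*} (ρ : PseudoMetric X ℝ) (x y z w : X) :
    ρ x w ≤ ρ x y + ρ y z + ρ z w := by
  linarith [ρ.triangle x y w, ρ.triangle y z w]

section PseudoMetric

variable {X : Type*} [UniformSpace X]

theorem PseudoMetric.uniformContinuous_of_ball_mem_uniformity (ρ : PseudoMetric X ℝ)
    (hρ : ∀ η > 0, {p : X × X | ρ p.1 p.2 < η} ∈ 𝓤 X) : UniformContinuous (uncurry ρ) := by
  refine Metric.uniformity_basis_dist.tendsto_right_iff.2 fun η hη => ?_
  filter_upwards [entourageProd_mem_uniformity (hρ _ (half_pos hη)) (hρ _ (half_pos hη))]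
    with ⟨⟨x, y⟩, ⟨x', y'⟩⟩ hxy
  have hx : ρ x x' < η / 2 := hxy.1
  have hy : ρ y y' < η / 2 := hxy.2
  rw [uncurry_apply_pair, uncurry_apply_pair, Real.dist_eq, abs_sub_lt_iff]
  constructor
  · linarith [ρ.triangle4 x x' y' y, ρ.symm y y']
  · linarith [ρ.triangle4 x' x y y', ρ.symm x x']

theorem exists_symm_comp_subset_seq {ε : Set (X × X)} (hε : ε ∈ 𝓤 X) :
    ∃ V : ℕ → Set (X × X), (∀ n, V n ∈ 𝓤 X) ∧ (∀ n, SetRel.IsSymm (V n)) ∧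
      (∀ n, V (n + 1) ○ V (n + 1) ⊆ V n) ∧ V 0 ⊆ ε := by
  have step : ∀ s : {s // s ∈ 𝓤 X}, ∃ t : {t // t ∈ 𝓤 X}, SetRel.IsSymm t.1 ∧ t.1 ○ t.1 ⊆ s.1 := by
    rintro ⟨s, hs⟩
    obtain ⟨t, ht, hsymm, hts⟩ := comp_symm_mem_uniformity_sets hs
    exact ⟨⟨t, ht⟩, hsymm, hts⟩
  choose next hsymm hcomp using step
  let V : ℕ → {s // s ∈ 𝓤 X} := fun n => Nat.rec (next ⟨ε, hε⟩) (fun _ s => next s) n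
  refine ⟨fun n => (V n).1, fun n => (V n).2, fun n => ?_, fun n => hcomp (V n), ?_⟩
  · cases n <;> exact hsymm _
  · exact fun p hp => hcomp _ ⟨p.1, refl_mem_uniformity (V 0).2, hp⟩

theorem exists_pseudoMetric_of_mem_uniformity {ε : Set (X × X)} (hε : ε ∈ 𝓤 X) :
    ∃ ρ : PseudoMetric X ℝ, (∀ η > 0, {p : X × X | ρ p.1 p.2 < η} ∈ 𝓤 X) ∧
      ∃ r > 0, {p : X × X | ρ p.1 p.2 < r} ⊆ ε := by
  obtain ⟨V, hVU, hVsymm, hVcomp, hV0⟩ := exists_symm_comp_subset_seq hε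
  have hVanti : Antitone V := antitone_nat_of_succ_le fun n p hp =>
    hVcomp n ⟨p.1, refl_mem_uniformity (hVU _), hp⟩
  have hbasis : (⨅ n, 𝓟 (V n)).HasBasis (fun _ => True) V :=
    hasBasis_iInf_principal hVanti.directed_ge
  have hle : 𝓤 X ≤ ⨅ n, 𝓟 (V n) := le_iInf fun n => le_principal_iff.2 (hVU n)
  -- a coarser uniformity with a countable basis, hence pseudometrizable
  let u : UniformSpace X := .ofCore
    { uniformity := ⨅ n, 𝓟 (V n)
      refl := hbasis.ge_iff.2 fun n _ => by
        rintro ⟨x, y⟩ rfl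
        exact refl_mem_uniformity (hVU n)
      symm := hbasis.ge_iff.2 fun n _ => mem_map.2 <| mem_of_superset (hbasis.mem_of_mem trivial)
        fun p hp => SetRel.symm (V n) hp
      comp := hbasis.ge_iff.2 fun n _ =>
        mem_of_superset (mem_lift' (hbasis.mem_of_mem (i := n + 1) trivial)) (hVcomp n) }
  have : IsCountablyGenerated (@uniformity X u) := hbasis.isCountablyGenerated
  obtain ⟨I, hI⟩ := @UniformSpace.metrizable_uniformity X u _
  have hIU : @uniformity X I.toUniformSpace = ⨅ n, 𝓟 (V n) := by rw [hI]; rfl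
  obtain ⟨r, hr, hrV⟩ := (@Metric.mem_uniformity_dist X I _).1 (hIU ▸ hbasis.mem_of_mem trivial)
  refine ⟨⟨I.toDist.dist, I.dist_self, I.dist_comm, I.dist_triangle⟩,
    fun η hη => hle (hIU ▸ @Metric.dist_mem_uniformity X I η hη), r, hr,
    fun p hp => hV0 (hrV hp)⟩

end PseudoMetric

theorem Continuous.pseudoMetric {X α : Type*} [TopologicalSpace X] [TopologicalSpace α]
    {ρ : PseudoMetric X ℝ} (hρ : Continuous (uncurry ρ)) {f g : α → X} (hf : Continuous f)
    (hg : Continuous g) : Continuous fun a => ρ (f a) (g a) :=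
  hρ.comp (hf.prodMk hg)

def HasFiniteNetsIn {X : Type*} (ρ : PseudoMetric X ℝ) (A : Set (X → X)) (D : Set X) : Prop :=
  ∀ F : Finset (X → X), ↑F ⊆ A → ∀ θ > 0,
    ∃ N : Finset X, ↑N ⊆ D ∧ ∀ k, ∃ d ∈ N, ∀ h ∈ F, ρ (h d) (h k) < θ

theorem PseudoMetric.eq_zero_of_forall_mem_eq {X : Type*} {ρ : PseudoMetric X ℝ} {S : Set X}
    (hS : ∀ x, ∀ η > 0, ∃ s ∈ S, ρ x s < η) {x y : X} (h : ∀ s ∈ S, ρ x s = ρ y s) :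
    ρ x y = 0 := by
  refine le_antisymm (le_of_forall_pos_lt_add fun η hη => ?_) (ρ.nonneg x y)
  obtain ⟨s, hs, hxs⟩ := hS x (η / 2) (half_pos hη)
  linarith [ρ.triangle x s y, ρ.symm s y, h s hs]

theorem Real.exists_rat_Ioo_subset {U : Set ℝ} (hU : IsOpen U) {x : ℝ} (hx : x ∈ U) :
    ∃ q : ℚ × ℚ, x ∈ Ioo (q.1 : ℝ) q.2 ∧ Ioo (q.1 : ℝ) q.2 ⊆ U := by
  obtain ⟨r, hr, hball⟩ := Metric.isOpen_iff.1 hU x hx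
  obtain ⟨a, hxa, hax⟩ := exists_rat_btwn (sub_lt_self x hr)
  obtain ⟨b, hxb, hbx⟩ := exists_rat_btwn (lt_add_of_pos_right x hr)
  refine ⟨(a, b), ⟨hax, hxb⟩, fun y hy => hball ?_⟩
  rw [Metric.mem_ball, Real.dist_eq, abs_lt]
  constructor <;> linarith [hy.1, hy.2]

theorem exists_finset_rat_box_subset {ι : Type*} {O : Set (ι → ℝ)} (hO : IsOpen O)
    {y : ι → ℝ} (hy : y ∈ O) :
    ∃ L : Finset (ι × ℚ × ℚ), (∀ z ∈ L, y z.1 ∈ Ioo (z.2.1 : ℝ) z.2.2) ∧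
      {y' | ∀ z ∈ L, y' z.1 ∈ Ioo (z.2.1 : ℝ) z.2.2} ⊆ O := by
  classical
  obtain ⟨I, u, hIu, hIO⟩ := isOpen_pi_iff.1 hO y hy
  choose q hq using fun i : I => Real.exists_rat_Ioo_subset (hIu i i.2).1 (hIu i i.2).2
  refine ⟨I.attach.image fun i => (i.1, q i), ?_, fun y' hy' => hIO fun i hi => (hq ⟨i, hi⟩).2 ?_⟩
  · simp only [Finset.mem_image, Finset.mem_attach, true_and]
    rintro _ ⟨i, rfl⟩
    exact (hq i).1
  simpa using hy' _ (Finset.mem_image_of_mem _ (Finset.mem_attach _ ⟨i, hi⟩))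

def ratBox {X : Type*} (ρ : PseudoMetric X ℝ) (L : Finset ((X × X) × ℚ × ℚ)) : Set (X → X) :=
  {g | ∀ z ∈ L, ρ (g z.1.1) z.1.2 ∈ Ioo (z.2.1 : ℝ) z.2.2}

theorem isOpen_ratBox {X : Type*} [TopologicalSpace X] {ρ : PseudoMetric X ℝ}
    (hρ : Continuous (uncurry ρ)) (L : Finset ((X × X) × ℚ × ℚ)) : IsOpen (ratBox ρ L) := by
  simp only [ratBox, ofPred_forall]
  exact isOpen_biInter_finset fun z _ => isOpen_Ioo.preimage
    (hρ.pseudoMetric (continuous_apply _) continuous_const)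

/-- Baire category in the compact Hausdorff image `Θ '' H`. -/
theorem exists_isOpen_image_subset_of_sUnion {Z Y : Type*} [TopologicalSpace Z]
    [TopologicalSpace Y] [T2Space Y] {Θ : Z → Y} (hΘ : Continuous Θ) {H : Set Z}
    (hH : IsCompact H) (hne : H.Nonempty) {𝒞 : Set (Set Z)} (h𝒞 : 𝒞.Countable)
    (h𝒞c : ∀ C ∈ 𝒞, IsClosed C) (hH𝒞 : H ⊆ ⋃₀ 𝒞) :
    ∃ C ∈ 𝒞, ∃ O : Set Y, IsOpen O ∧ (H ∩ Θ ⁻¹' O).Nonempty ∧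
      Θ '' (H ∩ Θ ⁻¹' O) ⊆ Θ '' (C ∩ H) := by
  have : CompactSpace (Θ '' H) := isCompact_iff_compactSpace.1 (hH.image hΘ)
  have : Nonempty (Θ '' H) := (hne.image Θ).to_subtype
  have : Countable 𝒞 := h𝒞.to_subtype
  let piece : 𝒞 → Set (Θ '' H) := fun C => (↑) ⁻¹' (Θ '' (C.1 ∩ H))
  have hcover : ⋃ C, piece C = univ := by
    refine eq_univ_of_forall fun ⟨_, g, hg, hgy⟩ => ?_
    obtain ⟨C, hC, hgC⟩ := hH𝒞 hg
    exact mem_iUnion.2 ⟨⟨C, hC⟩, g, ⟨hgC, hg⟩, hgy⟩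
  obtain ⟨C, y₀, hy₀⟩ := nonempty_interior_of_iUnion_of_closed (f := piece)
    (fun C => ((hH.inter_left (h𝒞c C C.2)).image hΘ).isClosed.preimage continuous_subtype_val)
    hcover
  obtain ⟨O, hO, hOC⟩ := isOpen_induced_iff.1 (isOpen_interior (s := piece C))
  refine ⟨C, C.2, O, hO, ?_, ?_⟩
  · obtain ⟨g, hg, hgy⟩ := y₀.2
    have hy₀O : y₀ ∈ (↑) ⁻¹' O := hOC ▸ hy₀
    exact ⟨g, hg, by simpa [mem_preimage, hgy] using hy₀O⟩
  · rintro _ ⟨g, ⟨hg, hgO⟩, rfl⟩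
    have hgC : (⟨Θ g, g, hg, rfl⟩ : Θ '' H) ∈ interior (piece C) := hOC ▸ hgO
    exact interior_subset (s := piece C) hgC

section Fragmentation

variable {X : Type*} [TopologicalSpace X] [CompactSpace X] {ρ : PseudoMetric X ℝ}

theorem exists_finset_net (hρ : Continuous (uncurry ρ)) {F : Finset (X → X)}
    (hF : ∀ h ∈ F, Continuous h) {θ : ℝ} (hθ : 0 < θ) :
    ∃ N : Finset X, ∀ k, ∃ d ∈ N, ∀ h ∈ F, ρ (h d) (h k) < θ := by
  have hopen (d : X) : IsOpen {k | ∀ h ∈ F, ρ (h d) (h k) < θ} := by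
    simp only [ofPred_forall]
    exact isOpen_biInter_finset fun h hh =>
      isOpen_lt (hρ.pseudoMetric continuous_const (hF h hh)) continuous_const
  obtain ⟨N, hN⟩ := isCompact_univ.elim_finite_subcover _ hopen
    fun k _ => mem_iUnion.2 ⟨k, fun h _ => by simpa using hθ⟩
  exact ⟨N, fun k => by simpa using hN (mem_univ k)⟩

theorem exists_countable_dense (hρ : Continuous (uncurry ρ)) :
    ∃ S : Set X, S.Countable ∧ ∀ x, ∀ η > 0, ∃ s ∈ S, ρ x s < η := by
  choose N hN using fun n : ℕ =>
    exists_finset_net hρ (F := {id}) (by simpa using continuous_id)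
      (Nat.one_div_pos_of_nat (n := n))
  refine ⟨⋃ n, ↑(N n), countable_iUnion fun n => (N n).countable_toSet, fun x η hη => ?_⟩
  obtain ⟨n, hn⟩ := exists_nat_one_div_lt hη
  obtain ⟨s, hs, hsx⟩ := hN n x
  exact ⟨s, mem_iUnion.2 ⟨n, hs⟩, by
    rw [ρ.symm]; simpa using (hsx id (Finset.mem_singleton_self _)).trans hn⟩

theorem exists_finset_modulus (hρ : Continuous (uncurry ρ)) {A : Set (X → X)}
    (hA : ∀ h ∈ A, Continuous h) {g : X → X} (hg : g ∈ closure A) (hgc : Continuous g)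
    {η : ℝ} (hη : 0 < η) :
    ∃ F : Finset (X → X), ↑F ⊆ A ∧ ∃ θ > 0,
      ∀ k k', (∀ h ∈ F, ρ (h k) (h k') < θ) → ρ (g k) (g k') < η := by
  classical
  have hgc₂ : Continuous fun p : X × X => ρ (g p.1) (g p.2) :=
    hρ.pseudoMetric (hgc.comp continuous_fst) (hgc.comp continuous_snd)
  have hK : IsCompact {p : X × X | η ≤ ρ (g p.1) (g p.2)} :=
    (isClosed_le continuous_const hgc₂).isCompact
  -- a pair separated by `g` is separated by some member of `A`, since `g ∈ closure A`
  have hcover : {p : X × X | η ≤ ρ (g p.1) (g p.2)} ⊆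
      ⋃ i : A × ℕ, {p | 1 / ((i.2 : ℝ) + 1) < ρ (i.1.1 p.1) (i.1.1 p.2)} := by
    intro p hp
    by_contra! hnot
    simp only [mem_iUnion, mem_ofPred_eq, not_exists, not_lt] at hnot
    have hA0 : A ⊆ {h | ρ (h p.1) (h p.2) ≤ 0} := fun h hh =>
      le_of_forall_gt_imp_ge_of_dense fun (ε : ℝ) hε => by
        obtain ⟨n, hn⟩ := exists_nat_one_div_lt hε
        exact (hnot (⟨h, hh⟩, n)).trans hn.le
    have := closure_minimal hA0 (isClosed_le (hρ.pseudoMetric (continuous_apply _)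
      (continuous_apply _)) continuous_const) hg
    exact hη.not_ge (hp.trans this)
  obtain ⟨t, ht⟩ := hK.elim_finite_subcover _ (fun i => isOpen_lt continuous_const
    (hρ.pseudoMetric ((hA _ i.1.2).comp continuous_fst) ((hA _ i.1.2).comp continuous_snd)))
    hcover
  have htA : ↑(t.image fun i => i.1.1) ⊆ A := by
    rw [Finset.coe_image]
    exact image_subset_iff.2 fun i _ => i.1.2
  refine ⟨_, htA, 1 / ((t.sup Prod.snd : ℕ) + 1), Nat.one_div_pos_of_nat, fun k k' hkk => ?_⟩
  by_contra! hge
  obtain ⟨i, hi, hlt⟩ := mem_iUnion₂.1 (ht (show (k, k') ∈ _ from hge))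
  have := hkk i.1.1 (Finset.mem_image_of_mem _ hi)
  have := Nat.one_div_le_one_div (α := ℝ) (Finset.le_sup (f := Prod.snd) hi)
  simp only [mem_ofPred_eq, comp_apply] at hlt
  linarith


theorem pseudoMetric_eq_zero_of_forall_mem_eq (hρ : Continuous (uncurry ρ)) {A : Set (X → X)}
    (hA : ∀ g ∈ closure A, Continuous g) {D S : Set X} (hD : HasFiniteNetsIn ρ A D)
    (hS : ∀ x, ∀ η > 0, ∃ s ∈ S, ρ x s < η) {g g' : X → X} (hg : g ∈ closure A)
    (hg' : g' ∈ closure A) (hgg' : ∀ d ∈ D, ∀ s ∈ S, ρ (g d) s = ρ (g' d) s) (k : X) :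
    ρ (g k) (g' k) = 0 := by
  classical
  have hAc : ∀ h ∈ A, Continuous h := fun h hh => hA h (subset_closure hh)
  refine le_antisymm (le_of_forall_pos_lt_add fun η hη => ?_) (ρ.nonneg _ _)
  obtain ⟨F, hF, θ, hθ, hgθ⟩ := exists_finset_modulus hρ hAc hg (hA g hg) (half_pos hη)
  obtain ⟨F', hF', θ', hθ', hg'θ⟩ := exists_finset_modulus hρ hAc hg' (hA g' hg') (half_pos hη)
  obtain ⟨N, hND, hN⟩ := hD (F ∪ F') (by simp [hF, hF']) _ (lt_min hθ hθ')
  obtain ⟨d, hdN, hd⟩ := hN k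
  have hgd : ρ (g k) (g d) < η / 2 := hgθ k d fun h hh => by
    rw [ρ.symm]; exact (hd h (Finset.mem_union_left _ hh)).trans_le (min_le_left _ _)
  have hg'd : ρ (g' k) (g' d) < η / 2 := hg'θ k d fun h hh => by
    rw [ρ.symm]; exact (hd h (Finset.mem_union_right _ hh)).trans_le (min_le_right _ _)
  have hd0 : ρ (g d) (g' d) = 0 := ρ.eq_zero_of_forall_mem_eq hS (hgg' d (hND hdN))
  linarith [ρ.triangle4 (g k) (g d) (g' d) (g' k), ρ.symm (g' d) (g' k)]

theorem exists_countable_closed_cover (hρ : Continuous (uncurry ρ)) {A : Set (X → X)}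
    (hAc : A.Countable) (hA : ∀ g ∈ closure A, Continuous g) {D S : Set X} (hDc : D.Countable)
    (hSc : S.Countable) (hD : HasFiniteNetsIn ρ A D) (hS : ∀ x, ∀ η > 0, ∃ s ∈ S, ρ x s < η)
    {c : ℝ} (hc : 0 < c) :
    ∃ 𝒞 : Set (Set (X → X)), 𝒞.Countable ∧ (∀ C ∈ 𝒞, IsClosed C) ∧ closure A ⊆ ⋃₀ 𝒞 ∧
      ∀ C ∈ 𝒞, ∀ g ∈ C, ∀ g' ∈ C, ∀ k, ρ (g k) (g' k) ≤ c := by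
  classical
  -- a piece fixes a modulus of continuity relative to finitely many members of `A`, and locates
  -- the values on a finite net up to `c / 4` by points of `S`
  let piece : Finset (X → X) × ℕ × Finset (X × X) → Set (X → X) := fun i =>
    {g | (∀ k k', (∀ h ∈ i.1, ρ (h k) (h k') < 1 / ((i.2.1 : ℝ) + 1)) → ρ (g k) (g k') ≤ c / 4) ∧
      ∀ z ∈ i.2.2, ρ (g z.1) z.2 ≤ c / 4}
  let J : Set (Finset (X → X) × ℕ × Finset (X × X)) := {i | ↑i.1 ⊆ A ∧ ↑i.2.2 ⊆ D ×ˢ S ∧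
    ∀ k, ∃ z ∈ i.2.2, ∀ h ∈ i.1, ρ (h z.1) (h k) < 1 / ((i.2.1 : ℝ) + 1)}
  refine ⟨piece '' J, ?_, ?_, ?_, ?_⟩
  · have hJ : J ⊆ {F : Finset (X → X) | ↑F ⊆ A} ×ˢ (univ : Set ℕ) ×ˢ
        {Γ : Finset (X × X) | ↑Γ ⊆ D ×ˢ S} := fun i hi => ⟨hi.1, trivial, hi.2.1⟩
    exact ((hAc.setOf_finset_subset.prod (countable_univ.prod
      (hDc.prod hSc).setOf_finset_subset)).mono hJ).image _
  · rintro _ ⟨i, -, rfl⟩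
    simp only [piece, ofPred_and, ofPred_forall]
    refine IsClosed.inter
      (isClosed_iInter fun k => isClosed_iInter fun k' => isClosed_iInter fun _ => isClosed_le (hρ.pseudoMetric (continuous_apply k) (continuous_apply k')) continuous_const)
      (isClosed_biInter fun z _ =>
        isClosed_le (hρ.pseudoMetric (continuous_apply _) continuous_const) continuous_const)
  · intro g hg
    obtain ⟨F, hF, θ, hθ, hgθ⟩ := exists_finset_modulus hρ (fun h hh => hA h (subset_closure hh))
      hg (hA g hg) (by positivity : 0 < c / 4)
    obtain ⟨n, hn⟩ := exists_nat_one_div_lt hθ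
    obtain ⟨N, hND, hN⟩ := hD F hF _ (Nat.one_div_pos_of_nat (n := n))
    choose s hsS hs using fun d => hS (g d) (c / 4) (by positivity)
    refine mem_sUnion_of_mem (t := piece (F, n, N.image fun d => (d, s d))) ⟨?_, ?_⟩
      ⟨_, ⟨hF, ?_, fun k => ?_⟩, rfl⟩
    · exact fun k k' hkk => (hgθ k k' fun h hh => (hkk h hh).trans hn).le
    · simpa using fun d _ => (hs d).le
    · rw [Finset.coe_image]; exact image_subset_iff.2 fun d hd => ⟨hND hd, hsS d⟩
    · obtain ⟨d, hd, hdk⟩ := hN k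
      exact ⟨(d, s d), Finset.mem_image_of_mem _ hd, hdk⟩
  · rintro _ ⟨i, ⟨-, -, hnet⟩, rfl⟩ g ⟨hgθ, hgS⟩ g' ⟨hg'θ, hg'S⟩ k
    obtain ⟨z, hz, hzk⟩ := hnet k
    have hgz := hgθ k z.1 fun h hh => by rw [ρ.symm]; exact hzk h hh
    have hg'z := hg'θ k z.1 fun h hh => by rw [ρ.symm]; exact hzk h hh
    linarith [ρ.triangle4 (g k) (g z.1) z.2 (g' k), ρ.triangle z.2 (g' z.1) (g' k),
      ρ.symm z.2 (g' z.1), ρ.symm (g' z.1) (g' k), hgS z hz, hg'S z hz]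

theorem exists_ratBox_diam_le (hρ : Continuous (uncurry ρ)) {H : Set (X → X)} (hH : IsClosed H)
    (hne : H.Nonempty) {P : Set (X × X)}
    (hP : ∀ g ∈ H, ∀ g' ∈ H, (∀ p ∈ P, ρ (g p.1) p.2 = ρ (g' p.1) p.2) → ∀ k, ρ (g k) (g' k) = 0)
    {𝒞 : Set (Set (X → X))} (h𝒞 : 𝒞.Countable) (h𝒞c : ∀ C ∈ 𝒞, IsClosed C) (hH𝒞 : H ⊆ ⋃₀ 𝒞)
    {c : ℝ} (h𝒞d : ∀ C ∈ 𝒞, ∀ g ∈ C, ∀ g' ∈ C, ∀ k, ρ (g k) (g' k) ≤ c) :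
    ∃ L : Finset ((X × X) × ℚ × ℚ), (∀ z ∈ L, z.1 ∈ P) ∧ (ratBox ρ L ∩ H).Nonempty ∧
      ∀ g ∈ ratBox ρ L ∩ H, ∀ g' ∈ ratBox ρ L ∩ H, ∀ k, ρ (g k) (g' k) ≤ c := by
  classical
  let Θ : (X → X) → P → ℝ := fun g p => ρ (g p.1.1) p.1.2
  have hΘ : Continuous Θ :=
    continuous_pi fun p => hρ.pseudoMetric (continuous_apply _) continuous_const
  obtain ⟨C, hC, O, hO, ⟨g₀, hg₀, hg₀O⟩, hOC⟩ :=
    exists_isOpen_image_subset_of_sUnion hΘ hH.isCompact hne h𝒞 h𝒞c hH𝒞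
  obtain ⟨L, hg₀L, hLO⟩ := exists_finset_rat_box_subset hO hg₀O
  have hbox (g : X → X) :
      g ∈ ratBox ρ (L.image fun z => (z.1.1, z.2)) ↔ ∀ z ∈ L, Θ g z.1 ∈ Ioo (z.2.1 : ℝ) z.2.2 :=
    Finset.forall_mem_image
  have hnear : ∀ g ∈ ratBox ρ (L.image fun z => (z.1.1, z.2)) ∩ H,
      ∃ g₁ ∈ C, ∀ k, ρ (g₁ k) (g k) = 0 := by
    rintro g ⟨hgL, hg⟩
    obtain ⟨g₁, ⟨hg₁C, hg₁⟩, hΘg₁⟩ := hOC ⟨g, ⟨hg, hLO ((hbox g).1 hgL)⟩, rfl⟩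
    exact ⟨g₁, hg₁C, hP g₁ hg₁ g hg fun p hp => congrFun hΘg₁ ⟨p, hp⟩⟩
  refine ⟨L.image fun z => (z.1.1, z.2), Finset.forall_mem_image.2 fun z _ => z.1.2,
    ⟨g₀, (hbox g₀).2 hg₀L, hg₀⟩, ?_⟩
  intro g hg g' hg' k
  obtain ⟨g₁, hg₁, hgg₁⟩ := hnear g hg
  obtain ⟨g₂, hg₂, hg'g₂⟩ := hnear g' hg'
  linarith [ρ.triangle4 (g k) (g₁ k) (g₂ k) (g' k), ρ.symm (g k) (g₁ k), hgg₁ k, hg'g₂ k,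
    h𝒞d C hC g₁ hg₁ g₂ hg₂ k]

theorem exists_countable_hasFiniteNetsIn (hρ : Continuous (uncurry ρ)) {E : Set (X → X)}
    (hE : ∀ g ∈ E, Continuous g) {S : Set X} (hS : S.Countable)
    (W : Finset ((X × X) × ℚ × ℚ) → Set (X → X)) (hW : ∀ L, (W L).Countable) :
    ∃ A ⊆ E, ∃ D : Set X, A.Countable ∧ D.Countable ∧ HasFiniteNetsIn ρ A D ∧
      ∀ L : Finset ((X × X) × ℚ × ℚ), (∀ z ∈ L, z.1 ∈ D ×ˢ S) → W L ∩ E ⊆ A := by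
  classical
  have hnet (F : Finset (X → X)) (n : ℕ) : ∃ N : Finset X, ↑F ⊆ E →
      ∀ k, ∃ d ∈ N, ∀ h ∈ F, ρ (h d) (h k) < 1 / ((n : ℝ) + 1) := by
    by_cases hF : ↑F ⊆ E
    · obtain ⟨N, hN⟩ := exists_finset_net hρ (fun h hh => hE h (hF hh)) Nat.one_div_pos_of_nat
      exact ⟨N, fun _ => hN⟩
    · exact ⟨∅, fun h => (hF h).elim⟩
  choose net hnet using hnet
  have hW' (t : Finset X) :
      (⋃ L ∈ {L : Finset ((X × X) × ℚ × ℚ) | ∀ z ∈ L, z.1 ∈ ↑t ×ˢ S}, W L).Countable := by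
    have hLt : {L : Finset ((X × X) × ℚ × ℚ) | ∀ z ∈ L, z.1 ∈ ↑t ×ˢ S} ⊆
        {L | ↑L ⊆ (↑t ×ˢ S) ×ˢ univ} := fun L hL z hz => ⟨hL z hz, trivial⟩
    exact Countable.biUnion
      ((((t.countable_toSet.prod hS).prod countable_univ).setOf_finset_subset).mono hLt)
      fun L _ => hW L
  obtain ⟨A, D, hAc, hDc, hWA, hnetD⟩ := exists_countable_forall_finset_subset₂ _
    (fun F => ⋃ n, (net F n : Set X)) hW'
    fun F => countable_iUnion fun n => (net F n).countable_toSet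
  refine ⟨E ∩ A, inter_subset_left, D, hAc.mono inter_subset_right, hDc, fun F hF θ hθ => ?_,
    fun L hL g hg => ⟨hg.2, hWA (L.image fun z => z.1.1) ?_ (mem_biUnion ?_ hg.1)⟩⟩
  · obtain ⟨n, hn⟩ := exists_nat_one_div_lt hθ
    refine ⟨net F n, (subset_iUnion (fun n => (net F n : Set X)) n).trans
      (hnetD F fun g hg => (hF hg).2), fun k => ?_⟩
    obtain ⟨d, hd, hdk⟩ := hnet F n (fun g hg => (hF hg).1) k
    exact ⟨d, hd, fun h hh => (hdk h hh).trans hn⟩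
  · rw [Finset.coe_image]
    exact image_subset_iff.2 fun z hz => (hL z hz).1
  · exact fun z hz => ⟨Finset.mem_image_of_mem _ hz, (hL z hz).2⟩

/-- Namioka-type fragmentation. If it failed, every rational box meeting `E` would contain a
`c`-separated pair; closing countably many of them up under nets gives `closure A`, on which
Baire's theorem finds a box of diameter `≤ c` that still contains such a pair. -/
theorem exists_isOpen_inter_nonempty_diam_le (hρ : Continuous (uncurry ρ)) {E : Set (X → X)}
    (hE : IsClosed E) (hne : E.Nonempty) (hEc : ∀ g ∈ E, Continuous g) {c : ℝ} (hc : 0 < c) :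
    ∃ G : Set (X → X), IsOpen G ∧ (G ∩ E).Nonempty ∧
      ∀ g ∈ G ∩ E, ∀ g' ∈ G ∩ E, ∀ k, ρ (g k) (g' k) ≤ c := by
  by_contra! hsep
  obtain ⟨S, hSc, hS⟩ := exists_countable_dense hρ
  have hw (L : Finset ((X × X) × ℚ × ℚ)) : ∃ w : (X → X) × (X → X), (ratBox ρ L ∩ E).Nonempty →
      w.1 ∈ ratBox ρ L ∩ E ∧ w.2 ∈ ratBox ρ L ∩ E ∧ ∃ k, c < ρ (w.1 k) (w.2 k) := by
    by_cases hL : (ratBox ρ L ∩ E).Nonempty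
    · obtain ⟨g, hg, g', hg', k, hk⟩ := hsep _ (isOpen_ratBox hρ L) hL
      exact ⟨(g, g'), fun _ => ⟨hg, hg', k, hk⟩⟩
    · exact ⟨(id, id), fun h => (hL h).elim⟩
  choose w hw using hw
  obtain ⟨A, hAE, D, hAc, hDc, hD, hwA⟩ := exists_countable_hasFiniteNetsIn hρ hEc hSc
    (fun L => {(w L).1, (w L).2}) fun L => (toFinite _).countable
  have hHE : closure A ⊆ E := closure_minimal hAE hE
  have hHc : ∀ g ∈ closure A, Continuous g := fun g hg => hEc g (hHE hg)
  have hwA' (L : Finset ((X × X) × ℚ × ℚ)) (hL : ∀ z ∈ L, z.1 ∈ D ×ˢ S)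
      (hLE : (ratBox ρ L ∩ E).Nonempty) : (w L).1 ∈ ratBox ρ L ∩ A ∧
        (w L).2 ∈ ratBox ρ L ∩ A ∧ ∃ k, c < ρ ((w L).1 k) ((w L).2 k) := by
    obtain ⟨h₁, h₂, hk⟩ := hw L hLE
    exact ⟨⟨h₁.1, hwA L hL ⟨mem_insert _ _, h₁.2⟩⟩,
      ⟨h₂.1, hwA L hL ⟨mem_insert_of_mem _ rfl, h₂.2⟩⟩, hk⟩
  have hHne : (closure A).Nonempty := by
    have hw₀ := (hwA' ∅ (by simp) (by simpa [ratBox] using hne)).1.2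
    exact ⟨_, subset_closure hw₀⟩
  obtain ⟨𝒞, h𝒞, h𝒞c, hH𝒞, h𝒞d⟩ := exists_countable_closed_cover hρ hAc hHc hDc hSc hD hS hc
  obtain ⟨L, hLP, hLH, hLd⟩ := exists_ratBox_diam_le hρ isClosed_closure hHne
    (fun g hg g' hg' hgg' => pseudoMetric_eq_zero_of_forall_mem_eq hρ hHc hD hS hg hg'
      fun d hd s hs => hgg' (d, s) (mk_mem_prod hd hs)) h𝒞 h𝒞c hH𝒞 h𝒞d
  obtain ⟨⟨h₁L, h₁A⟩, ⟨h₂L, h₂A⟩, k, hk⟩ := hwA' L hLP (hLH.mono (inter_subset_inter_right _ hHE))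
  exact hk.not_ge (hLd _ ⟨h₁L, subset_closure h₁A⟩ _ ⟨h₂L, subset_closure h₂A⟩ k)

end Fragmentation

section Equicontinuity

variable {X : Type*} [UniformSpace X] [CompactSpace X]

theorem exists_mem_uniformity_forall_pseudoMetric_lt {ρ : PseudoMetric X ℝ}
    (hball : ∀ η > 0, {p : X × X | ρ p.1 p.2 < η} ∈ 𝓤 X) {U : Set (X → X)} {p₀ : X → X}
    (hp₀ : p₀ ∈ U) (hp₀c : Continuous p₀) {c : ℝ} (hc : 0 < c)
    (hU : ∀ g ∈ U, ∀ g' ∈ U, ∀ k, ρ (g k) (g' k) ≤ c) :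
    ∃ δ ∈ 𝓤 X, ∀ x y, (x, y) ∈ δ → ∀ q ∈ U, ρ (q x) (q y) < 3 * c := by
  refine ⟨_, CompactSpace.uniformContinuous_of_continuous hp₀c (hball c hc),
    fun x y hxy q hq => ?_⟩
  have hxy : ρ (p₀ x) (p₀ y) < c := hxy
  linarith [ρ.triangle4 (q x) (p₀ x) (p₀ y) (q y), hU q hq p₀ hp₀ x, hU p₀ hp₀ q hq y]

theorem uniformEquicontinuous_of_isClosed_of_exists_inverse {E : Set (X → X)} (hE : IsClosed E)
    (hid : id ∈ E) (hEc : ∀ g ∈ E, Continuous g) (hmul : ∀ p ∈ E, ∀ q ∈ E, p ∘ q ∈ E)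
    (hinv : ∀ p ∈ E, ∃ q ∈ E, q ∘ p = id ∧ p ∘ q = id) : E.UniformEquicontinuous := by
  unfold Set.UniformEquicontinuous
  rw [(𝓤 X).basis_sets.uniformEquicontinuous_iff (𝓤 X).basis_sets]
  intro ε hε
  obtain ⟨ρ, hball, r, hr, hrε⟩ := exists_pseudoMetric_of_mem_uniformity hε
  have hρ := (ρ.uniformContinuous_of_ball_mem_uniformity hball).continuous
  obtain ⟨G, hG, ⟨p₀, hp₀⟩, hGd⟩ :=
    exists_isOpen_inter_nonempty_diam_le hρ hE ⟨id, hid⟩ hEc (by positivity : 0 < r / 3)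
  obtain ⟨δ₀, hδ₀, hδ₀G⟩ := exists_mem_uniformity_forall_pseudoMetric_lt hball hp₀ (hEc p₀ hp₀.2)
    (by positivity) hGd
  choose! inv hinvE hinvl hinvr using hinv
  -- finitely many right translates of `G` cover the compact set `E`
  have hcover : E ⊆ ⋃ s ∈ E, (fun p => p ∘ inv s) ⁻¹' G := by
    intro p hp
    have hs : inv p₀ ∘ p ∈ E := hmul _ (hinvE p₀ hp₀.2) _ hp
    have hps : p ∘ inv (inv p₀ ∘ p) = p₀ := calc
      p ∘ inv (inv p₀ ∘ p) = (p₀ ∘ inv p₀) ∘ p ∘ inv (inv p₀ ∘ p) := by rw [hinvr p₀ hp₀.2]; rfl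
      _ = p₀ ∘ ((inv p₀ ∘ p) ∘ inv (inv p₀ ∘ p)) := rfl
      _ = p₀ := by rw [hinvr _ hs]; rfl
    refine mem_biUnion hs ?_
    show p ∘ inv (inv p₀ ∘ p) ∈ G
    rw [hps]
    exact hp₀.1
  obtain ⟨b, hbE, hb, hbcover⟩ := hE.isCompact.elim_finite_subcover_image
    (fun s _ => hG.preimage (continuous_pi fun x => continuous_apply _)) hcover
  refine ⟨⋂ s ∈ b, (fun xy => (s xy.1, s xy.2)) ⁻¹' δ₀, (biInter_mem hb).2 fun s hs =>
    CompactSpace.uniformContinuous_of_continuous (hEc s (hbE hs)) hδ₀, ?_⟩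
  rintro x y hxy ⟨p, hp⟩
  obtain ⟨s, hsb, hps⟩ := mem_iUnion₂.1 (hbcover hp)
  have hback (z : X) : inv s (s z) = z := congrFun (hinvl s (hbE hsb)) z
  have := hδ₀G (s x) (s y) (mem_iInter₂.1 hxy s hsb) (p ∘ inv s)
    ⟨hps, hmul _ hp _ (hinvE s (hbE hsb))⟩
  simp only [comp_apply, hback] at this
  exact hrε (show ρ (p x) (p y) < r by linarith)

end Equicontinuity

theorem eq_id_of_comp_self_of_commute {X : Type*} {u : X → X} (hu : u ∘ u = u) {x₀ : X}
    (h : ∀ y, ∃ a : X ≃ X, Function.Commute a u ∧ a x₀ = y) : u = id := by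
  obtain ⟨b, hb, hbx⟩ := h (u x₀)
  have hb' : Function.Commute b.symm u := hb.inverse_left b.left_inv b.right_inv
  -- `u` fixes `x₀`, hence every point of the orbit of `x₀`
  have hbx' : b.symm (u x₀) = x₀ := b.symm_apply_eq.2 hbx.symm
  have hfix : u x₀ = x₀ := calc
    u x₀ = u (b.symm (u x₀)) := by rw [hbx']
    _ = b.symm (u (u x₀)) := (hb' _).symm
    _ = b.symm (u x₀) := by rw [← comp_apply (f := u), hu]
    _ = x₀ := hbx'
  funext y
  obtain ⟨a, ha, rfl⟩ := h y
  rw [id, ← ha x₀, hfix]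

section Ellis

variable {X : Type*} [TopologicalSpace X]

theorem comp_mem_closure {S : Set (X → X)} (hS : ∀ s ∈ S, Continuous s)
    (hmul : ∀ s ∈ S, ∀ s' ∈ S, s ∘ s' ∈ S) {p q : X → X} (hp : p ∈ closure S)
    (hq : q ∈ closure S) : p ∘ q ∈ closure S := by
  have hSq : ∀ s ∈ S, s ∘ q ∈ closure S := fun s hs =>
    map_mem_closure (continuous_pi fun x => (hS s hs).comp (continuous_apply x)) hq
      fun f hf => hmul s hs f hf
  simpa using
    map_mem_closure (t := closure S) (continuous_pi fun x => continuous_apply (q x)) hp hSq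

theorem Function.Commute.of_mem_closure [T2Space X] {S : Set (X → X)} {a p : X → X}
    (ha : Continuous a) (hS : ∀ s ∈ S, Function.Commute a s) (hp : p ∈ closure S) :
    Function.Commute a p := by
  have hclosed : IsClosed {f : X → X | Function.Commute a f} := by
    simp only [Function.Commute, Function.Semiconj, ofPred_forall]
    exact isClosed_iInter fun z => isClosed_eq (ha.comp (continuous_apply z)) (continuous_apply _)
  exact closure_minimal hS hclosed hp

theorem exists_comp_self_eq_self [T2Space X] {S : Set (X → X)} (hne : S.Nonempty) (hS : IsCompact S)
    (hmul : ∀ p ∈ S, ∀ q ∈ S, p ∘ q ∈ S) : ∃ u ∈ S, u ∘ u = u := by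
  let : TopologicalSpace (Function.End X) := inferInstanceAs (TopologicalSpace (X → X))
  have : T2Space (Function.End X) := inferInstanceAs (T2Space (X → X))
  exact exists_idempotent_in_compact_subsemigroup (M := Function.End X)
    (fun r => continuous_pi fun x => continuous_apply (r x)) S hne hS hmul

section Compact

variable [CompactSpace X] [T2Space X]

/-- The compact left ideal `E ∘ p` contains an idempotent. -/
theorem exists_comp_eq_id_of_idempotent {E : Set (X → X)} (hE : IsClosed E)
    (hmul : ∀ p ∈ E, ∀ q ∈ E, p ∘ q ∈ E) (hidem : ∀ u ∈ E, u ∘ u = u → u = id) {p : X → X}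
    (hp : p ∈ E) : ∃ q ∈ E, q ∘ p = id := by
  obtain ⟨_, ⟨q, hq, rfl⟩, hqp⟩ := exists_comp_self_eq_self (S := (· ∘ p) '' E) ⟨_, p, hp, rfl⟩
    (hE.isCompact.image (continuous_pi fun x => continuous_apply (p x)))
    (by rintro _ ⟨a, ha, rfl⟩ _ ⟨b, hb, rfl⟩; exact ⟨a ∘ p ∘ b, hmul _ ha _ (hmul _ hp _ hb), rfl⟩)
  exact ⟨q, hq, hidem _ (hmul _ hq _ hp) hqp⟩

theorem exists_inverse_of_idempotent {E : Set (X → X)} (hE : IsClosed E)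
    (hmul : ∀ p ∈ E, ∀ q ∈ E, p ∘ q ∈ E) (hidem : ∀ u ∈ E, u ∘ u = u → u = id) {p : X → X}
    (hp : p ∈ E) : ∃ q ∈ E, q ∘ p = id ∧ p ∘ q = id := by
  obtain ⟨q, hq, hqp⟩ := exists_comp_eq_id_of_idempotent hE hmul hidem hp
  obtain ⟨q', -, hq'q⟩ := exists_comp_eq_id_of_idempotent hE hmul hidem hq
  have hq' : q' = p := calc
    q' = q' ∘ (q ∘ p) := by rw [hqp]; rfl
    _ = p := by rw [← comp_assoc, hq'q]; rfl
  exact ⟨q, hq, hqp, hq' ▸ hq'q⟩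

end Compact

end Ellis

theorem minimal_universally_transitive_wap_iff_equicontinuous_general {T X : Type*}
    [Monoid T] [UniformSpace X] [CompactSpace X] [T2Space X]
    [MulAction T X]
    (huniv : ∃ x : X, ∀ y : X, ∃ a : X ≃ₜ X,
      (∀ (t : T) (z : X), a (t • z) = t • a z) ∧ a x = y) :
    (∀ p ∈ closure (Set.range fun t : T => fun x : X => t • x), Continuous p) ↔
    (∀ ε ∈ uniformity X, ∃ δ ∈ uniformity X, ∀ x y : X, (x, y) ∈ δ →
      ∀ t : T, (t • x, t • y) ∈ ε) := by
  set S := range fun t : T => fun x : X => t • x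
  have hequi : UniformEquicontinuous (fun t : T => fun x : X => t • x) ↔
      ∀ ε ∈ 𝓤 X, ∃ δ ∈ 𝓤 X, ∀ x y : X, (x, y) ∈ δ → ∀ t : T, (t • x, t • y) ∈ ε :=
    (𝓤 X).basis_sets.uniformEquicontinuous_iff (𝓤 X).basis_sets
  rw [← hequi, uniformEquicontinuous_iff_range]
  refine ⟨fun hwap => ?_, fun h p hp => (h.closure.uniformContinuous_of_mem hp).continuous⟩
  have hmul : ∀ p ∈ closure S, ∀ q ∈ closure S, p ∘ q ∈ closure S :=
    fun p hp q hq => comp_mem_closure (fun s hs => hwap s (subset_closure hs))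
      (by rintro _ ⟨t, rfl⟩ _ ⟨t', rfl⟩; exact ⟨t * t', funext (mul_smul t t')⟩) hp hq
  have hidem : ∀ u ∈ closure S, u ∘ u = u → u = id := by
    obtain ⟨x₀, hx₀⟩ := huniv
    refine fun u hu huu => eq_id_of_comp_self_of_commute (x₀ := x₀) huu fun y => ?_
    obtain ⟨a, ha, rfl⟩ := hx₀ y
    exact ⟨a.toEquiv, Function.Commute.of_mem_closure a.continuous
      (by rintro _ ⟨t, rfl⟩ z; exact ha t z) hu, rfl⟩
  exact (uniformEquicontinuous_of_isClosed_of_exists_inverse isClosed_closure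
    (subset_closure (show id ∈ S from ⟨1, funext (one_smul T)⟩)) hwap hmul
    fun p hp => exists_inverse_of_idempotent isClosed_closure hmul hidem hp).mono subset_closure

/-- Theorem 2.32A (first equivalence): for a minimal, universally transitive
semiflow of continuous self-maps on a compact Hausdorff space, weakly almost
periodic is equivalent to equicontinuous. -/
theorem minimal_universally_transitive_wap_iff_equicontinuous {T X : Type*}
    [Monoid T] [TopologicalSpace T] [UniformSpace X] [CompactSpace X] [T2Space X]
    [MulAction T X] [ContinuousSMul T X]
    (hmin : ∀ x : X, Dense (Set.range fun t : T => t • x))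
    (huniv : ∃ x : X, ∀ y : X, ∃ a : X ≃ₜ X,
      (∀ (t : T) (z : X), a (t • z) = t • a z) ∧ a x = y) :
    (∀ p ∈ closure (Set.range fun t : T => fun x : X => t • x), Continuous p) ↔
    (∀ ε ∈ uniformity X, ∃ δ ∈ uniformity X, ∀ x y : X, (x, y) ∈ δ →
      ∀ t : T, (t • x, t • y) ∈ ε) :=
  minimal_universally_transitive_wap_iff_equicontinuous_general huniv
end
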